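/- arXiv:1810.01176 — 2 statements merged into one kernel-verified Lean document; each statement's English description precedes it below -/
import Mathlib

section
/- For any t < log 2, the convex conjugate identity holds: sup_{u ∈ (0,∞)} (t·u - f(u)) = -log(2 - exp(t)), where f(u) = u·log(u) - (1+u)·log((1+u)/2) is the generator of the (unnormalized) Jensen–Shannon divergence. -/
noncomputable def fJS (u : ℝ) : ℝ := u * Real.log u - (1 + u) * Real.log ((1 + u) / 2)

theorem stmt_7 : ∀ t : ℝ, t < Real.log 2 →
    IsLUB {y : ℝ | ∃ u : ℝ, 0 < u ∧ y = t * u - fJS u} (-Real.log (2 - Real.exp t)) := by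
  intro t ht
  have hs0 : (0:ℝ) < Real.exp t := Real.exp_pos t
  have h2s : 0 < 2 - Real.exp t := by
    have h := Real.exp_lt_exp.mpr ht
    rw [Real.exp_log (by norm_num)] at h
    linarith
  set s := Real.exp t with hsdef
  have hlogs : Real.log s = t := Real.log_exp t
  constructor
  · rintro y ⟨u, hu, rfl⟩
    have h1u : 0 < 1 + u := by linarith
    have hx : 0 < s * (1 + u) / (2 * u) := by positivity
    have hy : 0 < (2 - s) * (1 + u) / 2 := by positivity
    have hlx := Real.log_le_sub_one_of_pos hx
    have hly := Real.log_le_sub_one_of_pos hy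
    have e1 : Real.log (s * (1 + u) / (2 * u)) =
        t + Real.log (1 + u) - Real.log 2 - Real.log u := by
      rw [Real.log_div (by positivity) (by positivity),
          Real.log_mul (by positivity) (by positivity),
          Real.log_mul (by positivity) (by positivity), hlogs]
      ring
    have e2 : Real.log ((2 - s) * (1 + u) / 2) =
        Real.log (2 - s) + Real.log (1 + u) - Real.log 2 := by
      rw [Real.log_div (by positivity) (by positivity),
          Real.log_mul (by positivity) (by positivity)]
    have e3 : Real.log ((1 + u) / 2) = Real.log (1 + u) - Real.log 2 :=
      Real.log_div (by positivity) (by positivity)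
    have key : t * u - fJS u =
        u * Real.log (s * (1 + u) / (2 * u)) + Real.log ((2 - s) * (1 + u) / 2)
          - Real.log (2 - s) := by
      unfold fJS
      rw [e1, e2, e3]
      ring
    rw [key]
    have hsum : u * (s * (1 + u) / (2 * u) - 1) + ((2 - s) * (1 + u) / 2 - 1) = 0 := by
      field_simp
      ring
    nlinarith [mul_le_mul_of_nonneg_left hlx (le_of_lt hu)]
  · intro b hb
    have hu0 : 0 < s / (2 - s) := div_pos hs0 h2s
    have hmem : -Real.log (2 - s) ∈ {y : ℝ | ∃ u : ℝ, 0 < u ∧ y = t * u - fJS u} := by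
      refine ⟨s / (2 - s), hu0, ?_⟩
      have h1 : 1 + s / (2 - s) = 2 / (2 - s) := by field_simp; ring
      have h2 : (2:ℝ) / (2 - s) / 2 = 1 / (2 - s) := by ring
      unfold fJS
      rw [h1, h2, Real.log_div (by positivity) (ne_of_gt h2s),
          Real.log_div one_ne_zero (ne_of_gt h2s), Real.log_one, hlogs]
      field_simp
      ring
    exact hb hmem
end

section
/- Specialization to JSD: for probability measures P ≪≫ M (mutually absolutely continuous where M = (P+Q)/2) and any measurable T : Ω → ℝ, the unnormalized Jensen–Shannon divergence satisfies KL(P‖M) + KL(Q‖M) ≥ E_P[log 2 - sp(-T)] - E_Q[sp(T) - log 2] = E_P[-sp(-T)] - E_Q[sp(T)] + log 4, provided the expectations exist. -/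
open MeasureTheory
open scoped ENNReal

noncomputable def sp (z : ℝ) : ℝ := Real.log (1 + Real.exp z)

noncomputable def klDiv {Ω : Type*} [MeasurableSpace Ω] (P Q : Measure Ω) : ℝ :=
  ∫ x, Real.log (P.rnDeriv Q x).toReal ∂P

/-!
Fenchel–Young duality for `x log x` gives, for `P ≪ M` and any `f`, the variational lower bound
`KL(P‖M) ≥ E_P[f] - E_M[exp f] + P(Ω)`. Take `f = log 2 - sp(-T)` for `P` and
`g = log 2 - sp(T)` for `Q`: since `exp (-sp (-t)) + exp (-sp t) = 1`, we have `exp f + exp g = 2`,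
so the two `E_M` terms cancel the masses of `P` and `Q`. The divergences are finite because
`P, Q ≤ 2 M` bounds the densities `dP/dM, dQ/dM` by `2`.
-/

open Real

lemma sp_nonneg (z : ℝ) : 0 ≤ sp z :=
  log_nonneg (by linarith [exp_pos z])

lemma sp_mono : Monotone sp := fun _ _ h ↦
  log_le_log (by positivity) (by gcongr)

@[fun_prop]
lemma continuous_sp : Continuous sp :=
  (continuous_const.add continuous_exp).log fun z ↦ (by positivity : (0 : ℝ) < 1 + exp z).ne'

lemma exp_neg_sp (z : ℝ) : exp (-sp z) = (1 + exp z)⁻¹ := by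
  rw [sp, exp_neg, exp_log (by positivity)]

lemma exp_sub_sp_neg_add_exp_sub_sp (a z : ℝ) : exp (a - sp (-z)) + exp (a - sp z) = exp a := by
  rw [sub_eq_add_neg, sub_eq_add_neg, exp_add, exp_add, exp_neg_sp, exp_neg_sp, ← mul_add,
    exp_neg]
  field_simp
  ring

/-- Fenchel–Young inequality for the convex function `x ↦ x log x`, whose conjugate is
`y ↦ exp (y - 1)`. -/
lemma mul_le_mul_log_add_exp_sub {a : ℝ} (ha : 0 ≤ a) (y : ℝ) : a * y ≤ a * log a + exp y - a := by
  rcases ha.eq_or_lt with rfl | ha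
  · simpa using (exp_pos y).le
  · have h := add_one_le_exp (y - log a)
    rw [exp_sub, exp_log ha, le_div_iff₀ ha] at h
    linarith

section Measure

variable {α : Type*} [MeasurableSpace α] {μ ν : Measure α}

lemma integrable_sp_comp [IsFiniteMeasure μ] {T : α → ℝ} (hT : Measurable T) {C : ℝ}
    (hC : ∀ x, T x ≤ C) : Integrable (fun x ↦ sp (T x)) μ :=
  .of_bound (continuous_sp.measurable.comp hT).aestronglyMeasurable (sp C) <| ae_of_all _ fun x ↦ by
    rw [norm_of_nonneg (sp_nonneg _)]
    exact sp_mono (hC x)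

lemma Measure.rnDeriv_le_of_le_smul [SigmaFinite ν] {c : ℝ≥0∞} (h : μ ≤ c • ν) :
    μ.rnDeriv ν ≤ᵐ[ν] fun _ ↦ c := by
  refine ae_le_of_forall_setLIntegral_le_of_sigmaFinite (μ.measurable_rnDeriv ν) fun s _ _ ↦ ?_
  rw [setLIntegral_const]
  exact (Measure.setLIntegral_rnDeriv_le s).trans (h s)

lemma integrable_llr_of_le_smul [IsFiniteMeasure μ] [IsFiniteMeasure ν] {c : ℝ≥0∞} (hc : c ≠ ∞)
    (h : μ ≤ c • ν) : Integrable (llr μ ν) μ := by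
  rw [← integrable_rnDeriv_mul_log_iff (Measure.absolutelyContinuous_of_le_smul h)]
  obtain ⟨B, hB⟩ := (isCompact_Icc (a := 0) (b := c.toReal)).exists_bound_of_continuousOn
    continuous_mul_log.continuousOn
  refine .of_bound (by fun_prop) B ?_
  filter_upwards [Measure.rnDeriv_le_of_le_smul h] with x hx
  exact hB _ ⟨ENNReal.toReal_nonneg, ENNReal.toReal_mono hc hx⟩

/-- The Nguyen–Wainwright–Jordan variational lower bound on the Kullback–Leibler divergence. -/
lemma integral_le_klDiv_add_integral_exp_sub [IsFiniteMeasure μ] [IsFiniteMeasure ν]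
    (hμν : μ ≪ ν) (h_llr : Integrable (llr μ ν) μ) {f : α → ℝ} (hf : Integrable f μ)
    (hef : Integrable (fun x ↦ exp (f x)) ν) :
    ∫ x, f x ∂μ ≤ klDiv μ ν + ∫ x, exp (f x) ∂ν - μ.real Set.univ := by
  let p := fun x ↦ (μ.rnDeriv ν x).toReal
  have hp : Integrable p ν := Measure.integrable_toReal_rnDeriv
  have hpf : Integrable (fun x ↦ p x * f x) ν := (integrable_toReal_rnDeriv_mul_iff hμν).2 hf
  have hpl : Integrable (fun x ↦ p x * log (p x)) ν := (integrable_rnDeriv_mul_log_iff hμν).2 h_llr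
  have hpl_exp : Integrable (fun x ↦ p x * log (p x) + exp (f x)) ν := hpl.add hef
  calc ∫ x, f x ∂μ = ∫ x, p x * f x ∂ν := (integral_toReal_rnDeriv_mul hμν).symm
    _ ≤ ∫ x, (p x * log (p x) + exp (f x) - p x) ∂ν :=
      integral_mono hpf (hpl_exp.sub hp) fun x ↦
        mul_le_mul_log_add_exp_sub ENNReal.toReal_nonneg (f x)
    _ = ∫ x, p x * log (p x) ∂ν + ∫ x, exp (f x) ∂ν - ∫ x, p x ∂ν := by
      rw [integral_sub hpl_exp hp, integral_add hpl hef]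
    _ = klDiv μ ν + ∫ x, exp (f x) ∂ν - μ.real Set.univ := by
      rw [integral_rnDeriv_mul_log hμν, Measure.integral_toReal_rnDeriv hμν]
      rfl

lemma integral_add_integral_le_klDiv_add_klDiv {P Q M : Measure α} [IsFiniteMeasure P]
    [IsFiniteMeasure Q] [IsFiniteMeasure M] (hPQ : P + Q = (2 : ℝ≥0∞) • M) {f g : α → ℝ}
    (hf_meas : Measurable f) (hg_meas : Measurable g) (hf : Integrable f P) (hg : Integrable g Q)
    (hfg : ∀ x, exp (f x) + exp (g x) = 2) :
    ∫ x, f x ∂P + ∫ x, g x ∂Q ≤ klDiv P M + klDiv Q M := by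
  have hPM : P ≤ (2 : ℝ≥0∞) • M := hPQ ▸ Measure.le_add_right le_rfl
  have hQM : Q ≤ (2 : ℝ≥0∞) • M := hPQ ▸ Measure.le_add_left le_rfl
  have hef : Integrable (fun x ↦ exp (f x)) M :=
    .of_bound hf_meas.exp.aestronglyMeasurable 2 <| ae_of_all _ fun x ↦ by
      rw [norm_of_nonneg (exp_pos _).le]; linarith [hfg x, exp_pos (g x)]
  have heg : Integrable (fun x ↦ exp (g x)) M :=
    .of_bound hg_meas.exp.aestronglyMeasurable 2 <| ae_of_all _ fun x ↦ by
      rw [norm_of_nonneg (exp_pos _).le]; linarith [hfg x, exp_pos (f x)]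
  have hmass : ∫ x, exp (f x) ∂M + ∫ x, exp (g x) ∂M = P.real Set.univ + Q.real Set.univ := by
    rw [← integral_add hef heg, ← measureReal_add_apply, hPQ]
    simp [hfg, mul_comm]
  linarith [integral_le_klDiv_add_integral_exp_sub (Measure.absolutelyContinuous_of_le_smul hPM)
      (integrable_llr_of_le_smul ENNReal.ofNat_ne_top hPM) hf hef,
    integral_le_klDiv_add_integral_exp_sub (Measure.absolutelyContinuous_of_le_smul hQM)
      (integrable_llr_of_le_smul ENNReal.ofNat_ne_top hQM) hg heg]

end Measure

theorem stmt_15_general {Ω : Type*} [MeasurableSpace Ω] (P Q : Measure Ω)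
    [IsProbabilityMeasure P] [IsProbabilityMeasure Q]
    (M : Measure Ω) (hM : M = (2 : ℝ≥0∞)⁻¹ • (P + Q))
    (T : Ω → ℝ) (hT : Measurable T) (C : ℝ) (hbdd : ∀ x, |T x| ≤ C) :
    ((∫ x, (Real.log 2 - sp (-(T x))) ∂P) - ∫ x, (sp (T x) - Real.log 2) ∂Q
      ≤ klDiv P M + klDiv Q M) ∧
    (∫ x, (Real.log 2 - sp (-(T x))) ∂P) - (∫ x, (sp (T x) - Real.log 2) ∂Q)
      = (∫ x, -sp (-(T x)) ∂P) - (∫ x, sp (T x) ∂Q) + Real.log 4 := by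
  have hPQ : P + Q = (2 : ℝ≥0∞) • M := by
    rw [hM, smul_smul, ENNReal.mul_inv_cancel two_ne_zero ENNReal.ofNat_ne_top, one_smul]
  have : IsFiniteMeasure M := hM ▸ (P + Q).smul_finite (by simp)
  have hspP : Integrable (fun x ↦ sp (-T x)) P :=
    integrable_sp_comp hT.neg fun x ↦ (neg_le_abs _).trans (hbdd x)
  have hspQ : Integrable (fun x ↦ sp (T x)) Q :=
    integrable_sp_comp hT fun x ↦ (le_abs_self _).trans (hbdd x)
  have hbound := integral_add_integral_le_klDiv_add_klDiv hPQ
    (f := fun x ↦ log 2 - sp (-T x)) (g := fun x ↦ log 2 - sp (T x)) (by fun_prop) (by fun_prop)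
    ((integrable_const _).sub hspP) ((integrable_const _).sub hspQ)
    fun x ↦ by rw [exp_sub_sp_neg_add_exp_sub_sp, exp_log two_pos]
  have hlog4 : log 4 = 2 * log 2 := by
    rw [show (4 : ℝ) = 2 ^ 2 by norm_num, log_pow, Nat.cast_ofNat]
  rw [integral_sub (integrable_const _) hspP, integral_sub (integrable_const _) hspQ] at hbound
  rw [integral_sub (integrable_const _) hspP, integral_sub hspQ (integrable_const _), integral_neg]
  simp only [integral_const, probReal_univ, one_smul] at hbound ⊢
  constructor <;> linarith

theorem stmt_15 {Ω : Type*} [MeasurableSpace Ω] (P Q : Measure Ω)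
    [IsProbabilityMeasure P] [IsProbabilityMeasure Q]
    (M : Measure Ω) (hM : M = (2 : ℝ≥0∞)⁻¹ • (P + Q))
    (hPM : P ≪ M) (hMP : M ≪ P) (hQM : Q ≪ M) (hMQ : M ≪ Q)
    (T : Ω → ℝ) (hT : Measurable T) (C : ℝ) (hbdd : ∀ x, |T x| ≤ C) :
    ((∫ x, (Real.log 2 - sp (-(T x))) ∂P) - ∫ x, (sp (T x) - Real.log 2) ∂Q
      ≤ klDiv P M + klDiv Q M) ∧
    (∫ x, (Real.log 2 - sp (-(T x))) ∂P) - (∫ x, (sp (T x) - Real.log 2) ∂Q)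
      = (∫ x, -sp (-(T x)) ∂P) - (∫ x, sp (T x) ∂Q) + Real.log 4 :=
  stmt_15_general P Q M hM T hT C hbdd
end
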